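/- Let κ be the natural transformation from the composite (inclusion FinSet ↪ Set) ⋙ (ultrafilter functor) to the inclusion FinSet ↪ Set whose component at a finite set B sends an ultrafilter V on B to the unique element b ∈ B with {b} ∈ V. Then the ultrafilter functor together with κ is a pointwise right Kan extension of the inclusion FinSet ↪ Set along itself (i.e., the ultrafilter functor is the underlying functor of the codensity monad of FinSet ↪ Set). -/

import Mathlib

open CategoryTheory

universe u

/-- The ultrafilter endofunctor on the category of sets. -/
def ultrafilterFunctor : Type u ⥤ Type u where
  obj X := Ultrafilter X
  map f := TypeCat.ofHom (Ultrafilter.map f)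
  map_id X := by ext; exact Iff.rfl
  map_comp f g := by ext; exact Iff.rfl

open Classical in
/-- The characteristic structured arrow of a subset. -/
noncomputable def chi {X : Type u} (A : Set X) : StructuredArrow X FintypeCat.incl.{u} :=
  StructuredArrow.mk (Y := FintypeCat.of (ULift.{u} Bool)) (TypeCat.ofHom fun x => ULift.up (decide (x ∈ A)))

open Classical

lemma sec_comp {X : Type u}
    (s : (StructuredArrow.proj X FintypeCat.incl.{u} ⋙ FintypeCat.incl).sections)
    (g : StructuredArrow X FintypeCat.incl.{u}) {B' : FintypeCat.{u}} (t : g.right ⟶ B') :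
    s.val (StructuredArrow.mk (g.hom ≫ FintypeCat.incl.map t)) = t (s.val g) :=
  (s.property (show g ⟶ StructuredArrow.mk (g.hom ≫ FintypeCat.incl.map t) from
    StructuredArrow.homMk t rfl)).symm

lemma sec_mk_congr {X : Type u}
    (s : (StructuredArrow.proj X FintypeCat.incl.{u} ⋙ FintypeCat.incl).sections)
    {B : FintypeCat.{u}} (f f' : X ⟶ FintypeCat.incl.obj B) (h : f = f') :
    s.val (StructuredArrow.mk f) = s.val (StructuredArrow.mk f') := by
  subst h; rfl

lemma sec_chi_eq {X : Type u}
    (s : (StructuredArrow.proj X FintypeCat.incl.{u} ⋙ FintypeCat.incl).sections)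
    (g : StructuredArrow X FintypeCat.incl.{u})
    (t : g.right ⟶ FintypeCat.of (ULift.{u} Bool)) (A : Set X)
    (h : ∀ x, t (g.hom x) = ULift.up (decide (x ∈ A))) :
    s.val (chi A) = t (s.val g) := by
  have e : (chi A).hom = g.hom ≫ FintypeCat.incl.map t := by ext x; exact (h x).symm
  exact (sec_mk_congr s (chi A).hom (g.hom ≫ FintypeCat.incl.map t) e).trans (sec_comp s g t)

/-- The boolean value a compatible section gives to a subset. -/
noncomputable def bval {X : Type u}
    (s : (StructuredArrow.proj X FintypeCat.incl.{u} ⋙ FintypeCat.incl).sections)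
    (A : Set X) : Bool :=
  (s.val (chi A)).down

lemma sec_chi_of_bval {X : Type u}
    (s : (StructuredArrow.proj X FintypeCat.incl.{u} ⋙ FintypeCat.incl).sections)
    (A : Set X) : s.val (chi A) = ULift.up (bval s A) := rfl

/-- The pairing arrow for two subsets. -/
noncomputable def chi2 {X : Type u} (A A' : Set X) : StructuredArrow X FintypeCat.incl.{u} :=
  StructuredArrow.mk (Y := FintypeCat.of (ULift.{u} Bool × ULift.{u} Bool))
    (TypeCat.ofHom fun x => (ULift.up (decide (x ∈ A)), ULift.up (decide (x ∈ A'))))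

lemma bval_inter {X : Type u}
    (s : (StructuredArrow.proj X FintypeCat.incl.{u} ⋙ FintypeCat.incl).sections)
    (A A' : Set X) : bval s (A ∩ A') = (bval s A && bval s A') := by
  have h1 : s.val (chi A) =
      (fun q : ULift.{u} Bool × ULift.{u} Bool => q.1) (s.val (chi2 A A')) :=
    sec_chi_eq s (chi2 A A') (FintypeCat.homMk fun q => q.1) A (fun x => rfl)
  have h2 : s.val (chi A') =
      (fun q : ULift.{u} Bool × ULift.{u} Bool => q.2) (s.val (chi2 A A')) :=
    sec_chi_eq s (chi2 A A') (FintypeCat.homMk fun q => q.2) A' (fun x => rfl)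
  have h3 : s.val (chi (A ∩ A')) =
      (fun q : ULift.{u} Bool × ULift.{u} Bool => ULift.up (q.1.down && q.2.down))
        (s.val (chi2 A A')) := by
    refine sec_chi_eq s (chi2 A A')
      (FintypeCat.homMk fun q : ULift.{u} Bool × ULift.{u} Bool => ULift.up (q.1.down && q.2.down))
      (A ∩ A') (fun x => ?_)
    change ULift.up (decide (x ∈ A) && decide (x ∈ A')) = _
    by_cases hA : x ∈ A <;> by_cases hA' : x ∈ A' <;>
      simp [hA, hA', Set.mem_inter_iff, chi2]
  unfold bval
  rw [h1, h2, h3]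

lemma bval_compl {X : Type u}
    (s : (StructuredArrow.proj X FintypeCat.incl.{u} ⋙ FintypeCat.incl).sections)
    (A : Set X) : bval s Aᶜ = !(bval s A) := by
  have h : s.val (chi Aᶜ) =
      (fun b : ULift.{u} Bool => ULift.up (!b.down)) (s.val (chi A)) := by
    refine sec_chi_eq s (chi A)
      (FintypeCat.homMk fun b : ULift.{u} Bool => ULift.up (!b.down)) Aᶜ (fun x => ?_)
    change ULift.up (!decide (x ∈ A)) = _
    by_cases hA : x ∈ A <;> simp [chi, hA, ULift.ext_iff]
  unfold bval
  rw [h]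

lemma bval_univ {X : Type u}
    (s : (StructuredArrow.proj X FintypeCat.incl.{u} ⋙ FintypeCat.incl).sections) :
    bval s Set.univ = true := by
  have h : s.val (chi (Set.univ : Set X)) =
      (fun _ : ULift.{u} Bool => ULift.up true) (s.val (chi (∅ : Set X))) := by
    refine sec_chi_eq s (chi (∅ : Set X))
      (FintypeCat.homMk fun _ : ULift.{u} Bool => ULift.up true) Set.univ (fun x => ?_)
    change ULift.up true = _
    simp
  unfold bval
  rw [h]

/-- The ultrafilter associated to a compatible section. -/
noncomputable def secU {X : Type u}
    (s : (StructuredArrow.proj X FintypeCat.incl.{u} ⋙ FintypeCat.incl).sections) :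
    Ultrafilter X :=
  Ultrafilter.ofComplNotMemIff
    { sets := {A | bval s A = true}
      univ_sets := bval_univ s
      sets_of_superset := by
        intro A A' hA hsub
        have h := bval_inter s A A'
        rw [Set.inter_eq_left.mpr hsub, hA] at h
        simpa using h.symm
      inter_sets := by
        intro A A' hA hA'
        have h := bval_inter s A A'
        rw [hA, hA'] at h
        exact h }
    (by
      intro A
      have hc := bval_compl s A
      show ¬ bval s Aᶜ = true ↔ bval s A = true
      rw [hc]
      cases bval s A <;> simp)

lemma mem_secU {X : Type u}
    (s : (StructuredArrow.proj X FintypeCat.incl.{u} ⋙ FintypeCat.incl).sections)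
    (A : Set X) : A ∈ secU s ↔ bval s A = true := Iff.rfl

lemma leg_eq_iff (κ : FintypeCat.incl.{u} ⋙ ultrafilterFunctor.{u} ⟶ FintypeCat.incl.{u})
    (hκ : ∀ (B : FintypeCat.{u}) (V : Ultrafilter B), ({κ.app B V} : Set B) ∈ V)
    {X : Type u} (U : Ultrafilter X) (g : StructuredArrow X FintypeCat.incl.{u})
    (y : FintypeCat.incl.obj g.right) :
    κ.app g.right (Ultrafilter.map g.hom U) = y ↔ g.hom ⁻¹' {y} ∈ U := by
  constructor
  · intro h
    have := hκ g.right (Ultrafilter.map g.hom U)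
    rw [h] at this
    exact this
  · intro h
    have h2 : g.hom ⁻¹' {κ.app g.right (Ultrafilter.map g.hom U)} ∈ U :=
      hκ g.right (Ultrafilter.map g.hom U)
    obtain ⟨x, hx1, hx2⟩ := Ultrafilter.nonempty_of_mem (Filter.inter_mem h2 h)
    exact hx1.symm.trans hx2

lemma chi_pre {X : Type u} (A : Set X) :
    (chi A).hom ⁻¹' {ULift.up true} = A := by
  ext x
  simp only [Set.mem_preimage, Set.mem_singleton_iff]
  constructor
  · intro h
    exact of_decide_eq_true (congrArg ULift.down (show (chi A).hom x = ULift.up true from h))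
  · intro h
    exact (show (chi A).hom x = ULift.up true from congrArg ULift.up (decide_eq_true h))

/-- Let `κ` be the natural transformation from `(FinSet ↪ Set) ⋙ (ultrafilter functor)`
to the inclusion `FinSet ↪ Set` whose component at a finite set `B` sends an ultrafilter
`V` on `B` to the unique element `b ∈ B` with `{b} ∈ V`.  Then the ultrafilter functor
together with `κ` is a pointwise right Kan extension of `FinSet ↪ Set` along itself
(hence the ultrafilter functor is the underlying functor of the codensity monad of
`FinSet ↪ Set`). -/
theorem stmt1 (κ : FintypeCat.incl.{u} ⋙ ultrafilterFunctor.{u} ⟶ FintypeCat.incl.{u})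
    (hκ : ∀ (B : FintypeCat.{u}) (V : Ultrafilter B), ({κ.app B V} : Set B) ∈ V) :
    Nonempty (Functor.RightExtension.mk ultrafilterFunctor.{u} κ).IsPointwiseRightKanExtension := by
  have key : ∀ X : Type u, Nonempty
      ((Functor.RightExtension.mk ultrafilterFunctor.{u} κ).IsPointwiseRightKanExtensionAt X) := by
    intro X
    rw [show (Functor.RightExtension.mk ultrafilterFunctor.{u} κ).IsPointwiseRightKanExtensionAt X
      = Limits.IsLimit ((Functor.RightExtension.mk ultrafilterFunctor.{u} κ).coneAt X) from rfl]
    rw [Limits.Types.isLimit_iff]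
    intro sv hsv
    set s : (StructuredArrow.proj X FintypeCat.incl.{u} ⋙ FintypeCat.incl).sections :=
      ⟨sv, hsv⟩ with hs
    have leg : ∀ (U : Ultrafilter X) (g : StructuredArrow X FintypeCat.incl.{u}),
        ((Functor.RightExtension.mk ultrafilterFunctor.{u} κ).coneAt X).π.app g U
          = κ.app g.right (Ultrafilter.map g.hom U) := fun U g => rfl
    have exist : ∀ g : StructuredArrow X FintypeCat.incl.{u},
        κ.app g.right (Ultrafilter.map g.hom (secU s)) = sv g := by
      intro g
      apply (leg_eq_iff κ hκ (secU s) g (sv g)).mpr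
      rw [mem_secU]
      have h : s.val (chi (g.hom ⁻¹' {sv g})) =
          (fun y : FintypeCat.incl.obj g.right => ULift.up (decide (y = sv g))) (s.val g) := by
        refine sec_chi_eq s g
          (FintypeCat.homMk fun y : FintypeCat.incl.obj g.right => ULift.up (decide (y = sv g)))
          (g.hom ⁻¹' {sv g}) (fun x => ?_)
        change ULift.up (decide (g.hom x = sv g)) = _
        by_cases hx : g.hom x = sv g
        · simp [hx]; exact Iff.rfl
        · simp [hx]; exact hx
      unfold bval
      refine (congrArg ULift.down h).trans ?_
      simp [hs]; rfl
    refine ⟨secU s, fun g => (leg _ g).trans (exist g), ?_⟩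
    intro U hU
    have memiff : ∀ (W : Ultrafilter X), (∀ g, κ.app g.right (Ultrafilter.map g.hom W) = sv g) →
        ∀ A : Set X, (A ∈ W ↔ sv (chi A) = ULift.up true) := by
      intro W hW A
      calc A ∈ W ↔ (chi A).hom ⁻¹' {ULift.up true} ∈ W := by rw [chi_pre]
        _ ↔ κ.app (chi A).right (Ultrafilter.map (chi A).hom W) = ULift.up true :=
            (leg_eq_iff κ hκ W (chi A) _).symm
        _ ↔ sv (chi A) = ULift.up true := by rw [hW (chi A)]; exact Iff.rfl
    have hU' : ∀ g, κ.app g.right (Ultrafilter.map g.hom U) = sv g :=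
      fun g => (leg U g).symm.trans (hU g)
    apply Ultrafilter.ext
    intro A
    rw [memiff U hU' A, memiff (secU s) exist A]
  exact ⟨fun X => (key X).some⟩
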